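/- For n ≥ 0, s ≥ 0, and μ ≠ 1, T_n^{(r,k)}(x|λ) = (1/(1-μ)^s) Σ_{m=0}^{n} [C(n,m) Σ_{j=0}^{s} C(s,j) (-μ)^{s-j} T_{n-m}^{(r,k)}(j|λ)] H_m^{(s)}(x|μ). -/

import Mathlib

open PowerSeries Finset

/-- e^{xt} as a formal power series. -/
noncomputable def expX (x : ℂ) : PowerSeries ℂ := rescale x (exp ℂ)

/-- 1 - e^{-t} as a formal power series. -/
noncomputable def oneSubExpNeg : PowerSeries ℂ := 1 - rescale (-1) (exp ℂ)

/-- Li_k(1-e^{-t}) = Σ_{m≥1} (1-e^{-t})^m / m^k as a formal power series. -/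
noncomputable def polyLogC (k : ℤ) : PowerSeries ℂ :=
  mk fun n => ∑ m ∈ Finset.Icc 1 n, (coeff (R := ℂ) n (oneSubExpNeg ^ m)) * ((m : ℂ) ^ k)⁻¹

/-- integer power of a power series (inverse via `PowerSeries.inv`). -/
noncomputable def zpowS (f : PowerSeries ℂ) (r : ℤ) : PowerSeries ℂ :=
  f ^ r.toNat * (f⁻¹) ^ (-r).toNat

/-- (1-λ)/(e^t-λ). -/
noncomputable def feBase (l : ℂ) : PowerSeries ℂ :=
  C (R := ℂ) (1 - l) * (exp ℂ - C (R := ℂ) l)⁻¹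

/-- exponential generating function Σ f(n) t^n/n!. -/
noncomputable def GF (f : ℕ → ℂ) : PowerSeries ℂ := mk fun n => f n / n.factorial

/-- Stirling numbers of the second kind: (e^t-1)^m = m! Σ_l S2(l,m) t^l/l!. -/
noncomputable def S2 (n m : ℕ) : ℂ :=
  (n.factorial : ℂ) / (m.factorial : ℂ) * coeff (R := ℂ) n ((exp ℂ - 1) ^ m)

/-!
Multiplying the generating function of `T` by `((e^t - μ)/(1 - μ))^s` and then by
`((1 - μ)/(e^t - μ))^s` changes nothing. Expanding `(e^t - μ)^s` binomially turns the first
product into a combination of the shifts `T(·|j)`, `0 ≤ j ≤ s`, and the second factor is the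
generating function of `H^{(s)}(x|μ)`; comparing coefficients of the resulting binomial
convolution gives the identity. The factor `1 - e^{-t}` on the left of `hT` is not invertible,
but it can be cancelled because `ℂ⟦X⟧` is a domain.
-/

lemma GF_injective : Function.Injective GF := by
  intro f g h
  funext n
  have hn := congrArg (coeff n) h
  simp only [GF, coeff_mk] at hn
  exact (div_left_inj' (Nat.cast_ne_zero.mpr n.factorial_ne_zero)).mp hn

lemma GF_mul (f g : ℕ → ℂ) :
    GF f * GF g = GF fun n => ∑ m ∈ range (n + 1), (n.choose m : ℂ) * f m * g (n - m) := by
  ext n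
  rw [coeff_mul, Nat.sum_antidiagonal_eq_sum_range_succ_mk]
  simp only [GF, coeff_mk, sum_div]
  refine sum_congr rfl fun m hm => ?_
  rw [Nat.cast_choose ℂ (Nat.lt_succ_iff.mp (mem_range.mp hm))]
  have := n.factorial_ne_zero
  have := m.factorial_ne_zero
  have := (n - m).factorial_ne_zero
  field_simp

lemma GF_const_mul (c : ℂ) (f : ℕ → ℂ) : GF (fun n => c * f n) = C c * GF f := by
  ext n
  simp [GF, coeff_C_mul, mul_div_assoc]

lemma GF_sum {ι : Type*} (t : Finset ι) (f : ι → ℕ → ℂ) :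
    GF (fun n => ∑ j ∈ t, f j n) = ∑ j ∈ t, GF (f j) := by
  ext n
  simp [GF, sum_div]

lemma expX_natCast (j : ℕ) : expX j = exp ℂ ^ j := by
  rw [exp_pow_eq_rescale_exp]
  rfl

lemma oneSubExpNeg_ne_zero : oneSubExpNeg ≠ 0 := by
  intro h
  simpa [oneSubExpNeg, coeff_rescale, coeff_exp] using congrArg (coeff 1) h

lemma sum_choose_mul_expX (mu : ℂ) (s : ℕ) :
    ∑ j ∈ range (s + 1), C ((s.choose j : ℂ) * (-mu) ^ (s - j)) * expX j
      = (exp ℂ - C mu) ^ s := by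
  rw [sub_eq_add_neg, ← map_neg, add_pow]
  refine sum_congr rfl fun j _ => ?_
  rw [expX_natCast, map_mul, map_natCast, map_pow]
  ring

lemma feBase_pow_mul_exp_sub_pow {mu : ℂ} (hmu : mu ≠ 1) (s : ℕ) :
    feBase mu ^ s * (exp ℂ - C mu) ^ s = C ((1 - mu) ^ s) := by
  have hconst : constantCoeff (exp ℂ - C mu) ≠ 0 := by
    simpa [constantCoeff_exp] using sub_ne_zero.mpr hmu.symm
  rw [feBase, ← mul_pow, mul_assoc, PowerSeries.inv_mul_cancel _ hconst, mul_one, map_pow]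

section Appell

variable {D F : PowerSeries ℂ} {T : ℕ → ℂ → ℂ}

lemma mul_GF_sum_choose_shift (hT : ∀ x, D * GF (fun n => T n x) = F * expX x)
    (mu : ℂ) (s : ℕ) :
    D * GF (fun n => ∑ j ∈ range (s + 1), (s.choose j : ℂ) * (-mu) ^ (s - j) * T n j)
      = F * (exp ℂ - C mu) ^ s := by
  rw [GF_sum, ← sum_choose_mul_expX, mul_sum, mul_sum]
  refine sum_congr rfl fun j _ => ?_
  rw [GF_const_mul, mul_left_comm, hT, mul_left_comm]

theorem eq_sum_choose_mul_frobeniusEuler (hD : D ≠ 0)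
    (hT : ∀ x, D * GF (fun n => T n x) = F * expX x) {mu : ℂ} (hmu : mu ≠ 1) {s : ℕ}
    {Hs : ℕ → ℂ → ℂ} (hHs : ∀ x, GF (fun n => Hs n x) = feBase mu ^ s * expX x)
    (n : ℕ) (x : ℂ) :
    T n x = (1 / (1 - mu) ^ s) * ∑ m ∈ range (n + 1),
      ((n.choose m : ℂ) * ∑ j ∈ range (s + 1),
        (s.choose j : ℂ) * (-mu) ^ (s - j) * T (n - m) j) * Hs m x := by
  set A : ℕ → ℂ := fun p =>
    ∑ j ∈ range (s + 1), (s.choose j : ℂ) * (-mu) ^ (s - j) * T p j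
  have hconv : GF (fun n => ∑ m ∈ range (n + 1), (n.choose m : ℂ) * A (n - m) * Hs m x)
      = GF (fun n => Hs n x) * GF A := by
    rw [GF_mul]
    congr! 3 with n m
    ring
  have hGF : GF (fun n => T n x) = GF (fun n =>
      1 / (1 - mu) ^ s * ∑ m ∈ range (n + 1), (n.choose m : ℂ) * A (n - m) * Hs m x) := by
    refine mul_left_cancel₀ hD ?_
    have hunit : C (1 / (1 - mu) ^ s) * C ((1 - mu) ^ s) = 1 := by
      rw [← map_mul, one_div_mul_cancel (pow_ne_zero _ (sub_ne_zero.mpr hmu.symm)), map_one]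
    calc D * GF (fun n => T n x)
        _ = C (1 / (1 - mu) ^ s) * C ((1 - mu) ^ s) * (F * expX x) := by rw [hT, hunit, one_mul]
        _ = C (1 / (1 - mu) ^ s) * (feBase mu ^ s * expX x * (D * GF A)) := by
          rw [mul_GF_sum_choose_shift hT, ← feBase_pow_mul_exp_sub_pow hmu]
          ring
        _ = _ := by rw [GF_const_mul, hconv, hHs]; ring
  exact congrFun (GF_injective hGF) n

end Appell

theorem stmt12_general (lam mu : ℂ) (hmu : mu ≠ 1) (r k : ℤ) (s : ℕ)
    (T Hs : ℕ → ℂ → ℂ)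
    (hT : ∀ x : ℂ, oneSubExpNeg * GF (fun n => T n x)
        = zpowS (feBase lam) (r) * polyLogC (k) * expX x)
    (hHs : ∀ x : ℂ, GF (fun n => Hs n x) = feBase mu ^ s * expX x) :
    ∀ (n : ℕ) (x : ℂ),
      T n x = (1 / (1 - mu) ^ s) * ∑ m ∈ range (n + 1),
        ((n.choose m : ℂ) * ∑ j ∈ range (s + 1),
          (s.choose j : ℂ) * (-mu) ^ (s - j) * T (n - m) j) * Hs m x :=
  eq_sum_choose_mul_frobeniusEuler oneSubExpNeg_ne_zero hT hmu hHs

theorem stmt12 (lam mu : ℂ) (hlam : lam ≠ 1) (hmu : mu ≠ 1) (r k : ℤ) (s : ℕ)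
    (T Hs : ℕ → ℂ → ℂ)
    (hT : ∀ x : ℂ, oneSubExpNeg * GF (fun n => T n x)
        = zpowS (feBase lam) (r) * polyLogC (k) * expX x)
    (hHs : ∀ x : ℂ, GF (fun n => Hs n x) = feBase mu ^ s * expX x) :
    ∀ (n : ℕ) (x : ℂ),
      T n x = (1 / (1 - mu) ^ s) * ∑ m ∈ range (n + 1),
        ((n.choose m : ℂ) * ∑ j ∈ range (s + 1),
          (s.choose j : ℂ) * (-mu) ^ (s - j) * T (n - m) j) * Hs m x :=
  stmt12_general lam mu hmu r k s T Hs hT hHs
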